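/- Let Ω ⊆ ℝ³ be a bounded open set and let ℓ, ψ, θ : Ω → ℝ be twice continuously differentiable functions forming an orthogonal coordinate system on Ω, i.e. ∇ℓ · ∇ψ = ∇ℓ · ∇θ = ∇ψ · ∇θ = 0 and the Jacobian h = ∇ℓ · (∇ψ × ∇θ) is nonvanishing on Ω. Assume |∇ℓ| = |∇ψ| on Ω and |∇θ| = |α| on Ω for a continuous function α : Ω → ℝ. Then the vector field w* = sin θ ∇ψ + cos θ ∇ℓ satisfies curl w* = −σ|α| w* on Ω, where σ(x) = h(x)/|h(x)| is the sign of the Jacobian; in particular w* is a Beltrami field in Ω. -/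

import Mathlib

noncomputable section

abbrev R3 : Type := Fin 3 → ℝ

/-- Euclidean dot product on ℝ³. -/
def dot3 (u v : R3) : ℝ := u 0 * v 0 + u 1 * v 1 + u 2 * v 2

/-- Cross product on ℝ³. -/
def cross3 (u v : R3) : R3 :=
  ![u 1 * v 2 - u 2 * v 1, u 2 * v 0 - u 0 * v 2, u 0 * v 1 - u 1 * v 0]

/-- Euclidean norm on ℝ³. -/
def norm3 (u : R3) : ℝ := Real.sqrt (dot3 u u)

/-- Partial derivative of a scalar field in the `i`-th coordinate direction. -/
def pd (i : Fin 3) (f : R3 → ℝ) (x : R3) : ℝ := fderiv ℝ f x (Pi.single i 1)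

/-- Gradient of a scalar field. -/
def grad3 (f : R3 → ℝ) (x : R3) : R3 := fun i => pd i f x

/-- Curl of a vector field. -/
def curl3 (w : R3 → R3) (x : R3) : R3 :=
  ![pd 1 (fun y => w y 2) x - pd 2 (fun y => w y 1) x,
    pd 2 (fun y => w y 0) x - pd 0 (fun y => w y 2) x,
    pd 0 (fun y => w y 1) x - pd 1 (fun y => w y 0) x]

/-- Divergence of a vector field. -/
def div3 (w : R3 → R3) (x : R3) : ℝ :=
  pd 0 (fun y => w y 0) x + pd 1 (fun y => w y 1) x + pd 2 (fun y => w y 2) x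

/-- Laplacian of a scalar field. -/
def lap3 (f : R3 → ℝ) (x : R3) : ℝ := div3 (grad3 f) x

/-! Since curl (f ∇g) = ∇f × ∇g, the curl of `w*` is ∇θ × (cos θ ∇ψ − sin θ ∇ℓ). For the orthogonal
frame ∇ℓ, ∇ψ, ∇θ with |∇ℓ| = |∇ψ|, crossing with ∇θ turns the plane of ∇ℓ, ∇ψ by a right angle
and scales it by h / |∇ℓ|², which gives curl w* = −(h / |∇ℓ|²) w*. Finally the volume of an
orthogonal frame is the product of its lengths, |h| = |∇ℓ| |∇ψ| |∇θ| = |∇ℓ|² |α|, so that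
h / |∇ℓ|² = σ |α|. -/

open Filter Topology

lemma dot3_self_nonneg (u : R3) : 0 ≤ dot3 u u := by
  simp only [dot3]
  exact add_nonneg (add_nonneg (mul_self_nonneg _) (mul_self_nonneg _)) (mul_self_nonneg _)

lemma sq_norm3 (u : R3) : norm3 u ^ 2 = dot3 u u :=
  Real.sq_sqrt (dot3_self_nonneg u)

lemma cross3_anticomm (u v : R3) : cross3 v u = -cross3 u v := by
  ext i; fin_cases i <;> simp [cross3] <;> ring

lemma dot3_cross3_rotate (a b c : R3) : dot3 b (cross3 c a) = dot3 a (cross3 b c) := by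
  simp only [dot3, cross3, Matrix.cons_val_zero, Matrix.cons_val_one, Matrix.cons_val]
  ring

lemma dot3_cross3_sq_eq_gram_det (a b c : R3) :
    dot3 a (cross3 b c) ^ 2 =
      dot3 a a * dot3 b b * dot3 c c + 2 * dot3 a b * dot3 b c * dot3 a c
        - dot3 a a * dot3 b c ^ 2 - dot3 b b * dot3 a c ^ 2 - dot3 c c * dot3 a b ^ 2 := by
  simp only [dot3, cross3, Matrix.cons_val_zero, Matrix.cons_val_one, Matrix.cons_val]
  ring

lemma abs_dot3_cross3_of_orthogonal {a b c : R3} (hab : dot3 a b = 0) (hac : dot3 a c = 0)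
    (hbc : dot3 b c = 0) : |dot3 a (cross3 b c)| = norm3 a * norm3 b * norm3 c := by
  have hn : 0 ≤ norm3 a * norm3 b * norm3 c := by unfold norm3; positivity
  rw [← sq_eq_sq₀ (abs_nonneg _) hn, sq_abs, dot3_cross3_sq_eq_gram_det, mul_pow, mul_pow,
    sq_norm3, sq_norm3, sq_norm3, hab, hac, hbc]
  ring

lemma dot3_self_smul_cross3_of_orthogonal {a b c : R3} (hab : dot3 a b = 0)
    (hac : dot3 a c = 0) : dot3 a a • cross3 b c = dot3 a (cross3 b c) • a := by
  simp only [dot3] at hab hac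
  ext i; fin_cases i <;> simp [dot3, cross3]
  · linear_combination (a 1 * c 2 - a 2 * c 1) * hab - (a 1 * b 2 - a 2 * b 1) * hac
  · linear_combination (a 2 * c 0 - a 0 * c 2) * hab - (a 2 * b 0 - a 0 * b 2) * hac
  · linear_combination (a 0 * c 1 - a 1 * c 0) * hab - (a 0 * b 1 - a 1 * b 0) * hac

lemma cross3_smul_sub_smul (c u v : R3) (s t : ℝ) :
    cross3 c (t • u - s • v) = t • cross3 c u - s • cross3 c v := by
  ext i; fin_cases i <;> simp [cross3] <;> ring

lemma cross3_smul_sub_smul_of_orthogonal {a b c : R3} (hab : dot3 a b = 0)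
    (hac : dot3 a c = 0) (hbc : dot3 b c = 0) (hnorm : dot3 a a = dot3 b b) (ha : dot3 a a ≠ 0)
    (s t : ℝ) :
    cross3 c (t • b - s • a) = -(dot3 a (cross3 b c) / dot3 a a) • (s • b + t • a) := by
  have hba : dot3 b a = 0 := by rw [← hab]; simp only [dot3]; ring
  have hbc_a := dot3_self_smul_cross3_of_orthogonal hab hac
  have hca_b := dot3_self_smul_cross3_of_orthogonal hbc hba
  rw [dot3_cross3_rotate, ← hnorm] at hca_b
  rw [← neg_div, div_eq_inv_mul, mul_smul, eq_inv_smul_iff₀ ha,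
    cross3_smul_sub_smul, smul_sub, smul_comm _ t, smul_comm _ s, cross3_anticomm b c, smul_neg,
    hbc_a, hca_b]
  module

lemma pd_add {f g : R3 → ℝ} {x : R3} (hf : DifferentiableAt ℝ f x)
    (hg : DifferentiableAt ℝ g x) (i : Fin 3) :
    pd i (fun y => f y + g y) x = pd i f x + pd i g x := by
  change fderiv ℝ (f + g) x _ = _
  rw [fderiv_add hf hg]
  rfl

lemma pd_mul {f g : R3 → ℝ} {x : R3} (hf : DifferentiableAt ℝ f x)
    (hg : DifferentiableAt ℝ g x) (i : Fin 3) :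
    pd i (fun y => f y * g y) x = f x * pd i g x + g x * pd i f x := by
  change fderiv ℝ (f * g) x _ = _
  rw [fderiv_mul hf hg]
  rfl

lemma pd_comp {h : ℝ → ℝ} {h' : ℝ} {f : R3 → ℝ} {x : R3} (hh : HasDerivAt h h' (f x))
    (hf : DifferentiableAt ℝ f x) (i : Fin 3) :
    pd i (fun y => h (f y)) x = h' * pd i f x := by
  change fderiv ℝ (h ∘ f) x _ = _
  rw [(hh.comp_hasFDerivAt x hf.hasFDerivAt).fderiv]
  rfl

lemma pd_congr {f g : R3 → ℝ} {x : R3} (h : f =ᶠ[𝓝 x] g) (i : Fin 3) :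
    pd i f x = pd i g x := by
  rw [pd, pd, h.fderiv_eq]

lemma hasFDerivAt_pd {f : R3 → ℝ} {x : R3} (hf : ContDiffAt ℝ 2 f x) (k : Fin 3) :
    HasFDerivAt (pd k f)
      ((ContinuousLinearMap.apply ℝ ℝ (Pi.single k 1 : R3)).comp (fderiv ℝ (fderiv ℝ f) x)) x :=
  (ContinuousLinearMap.apply ℝ ℝ (Pi.single k 1 : R3)).hasFDerivAt.comp x
    ((hf.fderiv_right (m := 1) (by norm_num)).differentiableAt one_ne_zero).hasFDerivAt

lemma pd_pd_comm {f : R3 → ℝ} {x : R3} (hf : ContDiffAt ℝ 2 f x) (i k : Fin 3) :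
    pd i (pd k f) x = pd k (pd i f) x := by
  rw [pd, pd, (hasFDerivAt_pd hf k).fderiv, (hasFDerivAt_pd hf i).fderiv]
  exact hf.isSymmSndFDerivAt (by simp) _ _

lemma grad3_comp {h : ℝ → ℝ} {h' : ℝ} {f : R3 → ℝ} {x : R3} (hh : HasDerivAt h h' (f x))
    (hf : DifferentiableAt ℝ f x) : grad3 (fun y => h (f y)) x = h' • grad3 f x :=
  funext (pd_comp hh hf)

lemma curl3_congr {v w : R3 → R3} {x : R3} (h : v =ᶠ[𝓝 x] w) : curl3 v x = curl3 w x := by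
  have hpd : ∀ i k, pd i (fun y => v y k) x = pd i (fun y => w y k) x :=
    fun i k => pd_congr (h.fun_comp (· k)) i
  simp only [curl3, hpd]

lemma curl3_add {v w : R3 → R3} {x : R3} (hv : ∀ k, DifferentiableAt ℝ (fun y => v y k) x)
    (hw : ∀ k, DifferentiableAt ℝ (fun y => w y k) x) :
    curl3 (fun y => v y + w y) x = curl3 v x + curl3 w x := by
  ext i; fin_cases i <;> simp [curl3, pd_add (hv _) (hw _)] <;> ring

lemma curl3_smul_grad3 {f g : R3 → ℝ} {x : R3} (hf : DifferentiableAt ℝ f x)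
    (hg : ContDiffAt ℝ 2 g x) :
    curl3 (fun y => f y • grad3 g y) x = cross3 (grad3 f x) (grad3 g x) := by
  have hpd : ∀ i k,
      pd i (fun y => f y * pd k g y) x = f x * pd i (pd k g) x + pd k g x * pd i f x :=
    fun i k => pd_mul hf (hasFDerivAt_pd hg k).differentiableAt i
  ext i; fin_cases i <;>
    simp [curl3, cross3, grad3, hpd, pd_pd_comm hg 1 2, pd_pd_comm hg 2 0, pd_pd_comm hg 0 1] <;>
    ring

lemma curl3_sin_smul_grad3_add_cos_smul_grad3 {ℓ ψ θ : R3 → ℝ} {x : R3}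
    (hℓ : ContDiffAt ℝ 2 ℓ x) (hψ : ContDiffAt ℝ 2 ψ x) (hθ : DifferentiableAt ℝ θ x) :
    curl3 (fun y => Real.sin (θ y) • grad3 ψ y + Real.cos (θ y) • grad3 ℓ y) x =
      cross3 (grad3 θ x) (Real.cos (θ x) • grad3 ψ x - Real.sin (θ x) • grad3 ℓ x) := by
  have hsmul {f g : R3 → ℝ} (hf : DifferentiableAt ℝ f x) (hg : ContDiffAt ℝ 2 g x) (k : Fin 3) :
      DifferentiableAt ℝ (fun y => (f y • grad3 g y) k) x :=
    hf.mul (hasFDerivAt_pd hg k).differentiableAt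
  rw [curl3_add (hsmul hθ.sin hψ) (hsmul hθ.cos hℓ), curl3_smul_grad3 hθ.sin hψ,
    curl3_smul_grad3 hθ.cos hℓ, grad3_comp (Real.hasDerivAt_sin _) hθ,
    grad3_comp (Real.hasDerivAt_cos _) hθ]
  ext i; fin_cases i <;> simp [cross3] <;> ring

theorem beltrami_construction_star_general
    (Ω : Set R3) (hΩopen : IsOpen Ω)
    (ℓ ψ θ α : R3 → ℝ)
    (hℓ : ContDiffOn ℝ 2 ℓ Ω) (hψ : ContDiffOn ℝ 2 ψ Ω) (hθ : ContDiffOn ℝ 2 θ Ω)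
    (horth1 : ∀ x ∈ Ω, dot3 (grad3 ℓ x) (grad3 ψ x) = 0)
    (horth2 : ∀ x ∈ Ω, dot3 (grad3 ℓ x) (grad3 θ x) = 0)
    (horth3 : ∀ x ∈ Ω, dot3 (grad3 ψ x) (grad3 θ x) = 0)
    (hjac : ∀ x ∈ Ω, dot3 (grad3 ℓ x) (cross3 (grad3 ψ x) (grad3 θ x)) ≠ 0)
    (hnorm : ∀ x ∈ Ω, norm3 (grad3 ℓ x) = norm3 (grad3 ψ x))
    (heik : ∀ x ∈ Ω, norm3 (grad3 θ x) = |α x|)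
    (wstar : R3 → R3)
    (hwstar : ∀ x ∈ Ω, wstar x = Real.sin (θ x) • grad3 ψ x + Real.cos (θ x) • grad3 ℓ x) :
    ∀ x ∈ Ω,
      curl3 wstar x =
        (-((dot3 (grad3 ℓ x) (cross3 (grad3 ψ x) (grad3 θ x)) /
            |dot3 (grad3 ℓ x) (cross3 (grad3 ψ x) (grad3 θ x))|) * |α x|)) • wstar x := by
  intro x hx
  have hΩx : Ω ∈ 𝓝 x := hΩopen.mem_nhds hx
  rw [curl3_congr (eventuallyEq_of_mem hΩx hwstar), hwstar x hx,
    curl3_sin_smul_grad3_add_cos_smul_grad3 (hℓ.contDiffAt hΩx) (hψ.contDiffAt hΩx)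
      ((hθ.contDiffAt hΩx).differentiableAt two_ne_zero)]
  set H := dot3 (grad3 ℓ x) (cross3 (grad3 ψ x) (grad3 θ x))
  have habs : |H| = dot3 (grad3 ℓ x) (grad3 ℓ x) * |α x| := by
    rw [abs_dot3_cross3_of_orthogonal (horth1 x hx) (horth2 x hx) (horth3 x hx), ← hnorm x hx,
      heik x hx, ← sq_norm3, sq]
  obtain ⟨hℓ0, hα0⟩ : dot3 (grad3 ℓ x) (grad3 ℓ x) ≠ 0 ∧ |α x| ≠ 0 :=
    mul_ne_zero_iff.mp (habs ▸ abs_ne_zero.mpr (hjac x hx))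
  have hsign : H / |H| * |α x| = H / dot3 (grad3 ℓ x) (grad3 ℓ x) := by
    rw [habs]; field_simp
  have hnorm_sq : dot3 (grad3 ℓ x) (grad3 ℓ x) = dot3 (grad3 ψ x) (grad3 ψ x) := by
    rw [← sq_norm3, ← sq_norm3, hnorm x hx]
  rw [hsign, cross3_smul_sub_smul_of_orthogonal (horth1 x hx) (horth2 x hx) (horth3 x hx)
    hnorm_sq hℓ0]

/-- Construction of Beltrami fields from an orthogonal coordinate system:
the field `w* = sin θ ∇ψ + cos θ ∇ℓ`. -/
theorem beltrami_construction_star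
    (Ω : Set R3) (hΩopen : IsOpen Ω) (hΩbdd : Bornology.IsBounded Ω)
    (ℓ ψ θ α : R3 → ℝ)
    (hℓ : ContDiffOn ℝ 2 ℓ Ω) (hψ : ContDiffOn ℝ 2 ψ Ω) (hθ : ContDiffOn ℝ 2 θ Ω)
    (hα : ContinuousOn α Ω)
    (horth1 : ∀ x ∈ Ω, dot3 (grad3 ℓ x) (grad3 ψ x) = 0)
    (horth2 : ∀ x ∈ Ω, dot3 (grad3 ℓ x) (grad3 θ x) = 0)
    (horth3 : ∀ x ∈ Ω, dot3 (grad3 ψ x) (grad3 θ x) = 0)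
    (hjac : ∀ x ∈ Ω, dot3 (grad3 ℓ x) (cross3 (grad3 ψ x) (grad3 θ x)) ≠ 0)
    (hnorm : ∀ x ∈ Ω, norm3 (grad3 ℓ x) = norm3 (grad3 ψ x))
    (heik : ∀ x ∈ Ω, norm3 (grad3 θ x) = |α x|)
    (wstar : R3 → R3)
    (hwstar : ∀ x ∈ Ω, wstar x = Real.sin (θ x) • grad3 ψ x + Real.cos (θ x) • grad3 ℓ x) :
    ∀ x ∈ Ω,
      curl3 wstar x =
        (-((dot3 (grad3 ℓ x) (cross3 (grad3 ψ x) (grad3 θ x)) /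
            |dot3 (grad3 ℓ x) (cross3 (grad3 ψ x) (grad3 θ x))|) * |α x|)) • wstar x :=
  beltrami_construction_star_general Ω hΩopen ℓ ψ θ α hℓ hψ hθ horth1 horth2 horth3 hjac hnorm heik
    wstar hwstar
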